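/- arXiv:1802.09357 — 4 statements merged into one kernel-verified Lean document; each statement's English description precedes it below -/
import Mathlib

section
/- Let C be a finite d-dimensional simplicial complex and let C' be obtained from C by a Pachner move of dimension k on a k-simplex A (i.e., the link of A in C is the boundary of a (d-k)-simplex B not in C; delete all simplices containing A and add B together with all joins of B with proper faces of A). Then the Euler characteristic of C' equals the Euler characteristic of C. -/
open Finset

/-- A finite abstract simplicial complex: nonempty simplices, closed under nonempty subsets. -/
def IsComplex (C : Finset (Finset ℕ)) : Prop :=
  ∀ S ∈ C, S ≠ ∅ ∧ ∀ T, T ⊆ S → T ≠ ∅ → T ∈ C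

/-- Pure of dimension d: every simplex lies in a simplex of cardinality d+1. -/
def IsPure (d : ℕ) (C : Finset (Finset ℕ)) : Prop :=
  ∀ S ∈ C, ∃ M ∈ C, S ⊆ M ∧ M.card = d + 1

/-- The link of a simplex A in C. -/
def slink (A : Finset ℕ) (C : Finset (Finset ℕ)) : Finset (Finset ℕ) :=
  C.filter (fun L => Disjoint A L ∧ A ∪ L ∈ C)

/-- The boundary of a simplex B: all nonempty proper subsets of B. -/
def sbdry (B : Finset ℕ) : Finset (Finset ℕ) :=
  B.powerset.filter (fun S => S ≠ ∅ ∧ S ≠ B)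

/-- The Pachner move on A with inserted simplex B: delete all simplices containing A,
add B together with the joins of B with the proper (possibly empty) faces of A. -/
def pachner (C : Finset (Finset ℕ)) (A B : Finset ℕ) : Finset (Finset ℕ) :=
  C.filter (fun S => ¬ A ⊆ S) ∪ (A.powerset.filter (fun F => F ≠ A)).image (fun F => B ∪ F)

/-- Number of i-dimensional simplices (cardinality i+1). -/
def fcount (i : ℕ) (C : Finset (Finset ℕ)) : ℕ :=
  (C.filter (fun S => S.card = i + 1)).card

/-- Euler characteristic: alternating sum of face numbers. -/
def eulerChar (C : Finset (Finset ℕ)) : ℤ :=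
  ∑ S ∈ C, (-1 : ℤ) ^ (S.card - 1)

/-!
The move keeps the simplices not containing `A`. Since the link of `A` is `∂B`, the simplices
containing `A` are the joins `A ∪ L` with `L ⊊ B` (including `L = ∅`), and the move replaces them
by the joins `B ∪ F` with `F ⊊ A`. For nonempty disjoint `X`, `Y`, the proper faces of `X` have
alternating count `-(-1) ^ |X|`, so the joins `Y ∪ F`, `F ⊊ X`, contribute `(-1) ^ (|X| + |Y|)` to
the Euler characteristic. This is symmetric in `X` and `Y`, so both families contribute the same.
-/

lemma sum_neg_one_pow_card_filter_ne_self {X : Finset ℕ} (hX : X.Nonempty) :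
    ∑ F ∈ X.powerset.filter (· ≠ X), (-1 : ℤ) ^ F.card = -(-1) ^ X.card := by
  rw [filter_ne', eq_neg_iff_add_eq_zero,
    sum_erase_add _ _ (mem_powerset_self X), sum_powerset_neg_one_pow_card_of_nonempty hX]

lemma injOn_union_powerset {X Y : Finset ℕ} (h : Disjoint Y X) :
    Set.InjOn (Y ∪ ·) X.powerset := by
  intro F₁ hF₁ F₂ hF₂ hF
  rw [coe_powerset, Set.mem_preimage, Set.mem_powerset_iff, coe_subset] at hF₁ hF₂
  rw [← union_sdiff_cancel_left (h.mono_right hF₁), ← union_sdiff_cancel_left (h.mono_right hF₂)]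
  exact congrArg (· \ Y) hF

lemma eulerChar_union {C D : Finset (Finset ℕ)} (h : Disjoint C D) :
    eulerChar (C ∪ D) = eulerChar C + eulerChar D :=
  sum_union h

lemma eulerChar_filter_add_filter_not (C : Finset (Finset ℕ)) (p : Finset ℕ → Prop)
    [DecidablePred p] :
    eulerChar (C.filter p) + eulerChar (C.filter (¬ p ·)) = eulerChar C :=
  sum_filter_add_sum_filter_not C p _

lemma eulerChar_image_union_proper_faces {X Y : Finset ℕ} (hX : X.Nonempty) (hY : Y.Nonempty)
    (h : Disjoint Y X) :
    eulerChar ((X.powerset.filter (· ≠ X)).image (Y ∪ ·)) = (-1) ^ (X.card + Y.card) := by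
  have hYpos := hY.card_pos
  have hinj : Set.InjOn (Y ∪ ·) (X.powerset.filter (· ≠ X)) :=
    (injOn_union_powerset h).mono (coe_subset.mpr (filter_subset _ _))
  have hsign : ∀ F ∈ X.powerset.filter (· ≠ X),
      (-1 : ℤ) ^ ((Y ∪ F).card - 1) = (-1) ^ (Y.card - 1) * (-1) ^ F.card := by
    intro F hF
    rw [card_union_of_disjoint (h.mono_right (mem_powerset.mp (mem_filter.mp hF).1)), ← pow_add]
    congr 1
    omega
  rw [eulerChar, sum_image hinj, sum_congr rfl hsign, ← mul_sum,
    sum_neg_one_pow_card_filter_ne_self hX, mul_neg, ← pow_add, ← neg_one_mul, ← pow_succ']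
  congr 1
  omega

section Star

variable {C : Finset (Finset ℕ)} {A B : Finset ℕ}

lemma mem_sbdry_iff_mem_slink (hlink : slink A C = sbdry B) {L : Finset ℕ} :
    L ∈ sbdry B ↔ L ∈ C ∧ Disjoint A L ∧ A ∪ L ∈ C := by
  rw [← hlink, slink, mem_filter]

lemma filter_superset_eq_image_union (hC : IsComplex C) (hA : A ∈ C) (hB : B.Nonempty)
    (hlink : slink A C = sbdry B) :
    C.filter (A ⊆ ·) = (B.powerset.filter (· ≠ B)).image (A ∪ ·) := by
  ext S
  simp only [mem_filter, mem_image, mem_powerset]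
  constructor
  · rintro ⟨hS, hAS⟩
    refine ⟨S \ A, ?_, union_sdiff_of_subset hAS⟩
    obtain hL | hL := eq_or_ne (S \ A) ∅
    · exact hL ▸ ⟨empty_subset B, hB.ne_empty.symm⟩
    · have hLC : S \ A ∈ C := (hC S hS).2 _ sdiff_subset hL
      have hLbdry : S \ A ∈ sbdry B := (mem_sbdry_iff_mem_slink hlink).mpr
        ⟨hLC, disjoint_sdiff, (union_sdiff_of_subset hAS).symm ▸ hS⟩
      rw [sbdry, mem_filter, mem_powerset] at hLbdry
      exact ⟨hLbdry.1, hLbdry.2.2⟩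
  · rintro ⟨L, ⟨hLB, hLne⟩, rfl⟩
    refine ⟨?_, subset_union_left⟩
    obtain rfl | hL := eq_or_ne L ∅
    · rwa [union_empty]
    · exact ((mem_sbdry_iff_mem_slink hlink).mp
        (mem_filter.mpr ⟨mem_powerset.mpr hLB, hL, hLne⟩)).2.2

lemma disjoint_filter_not_superset_image_union (hC : IsComplex C) (hB : B ∉ C)
    (hBne : B.Nonempty) :
    Disjoint (C.filter (¬ A ⊆ ·)) ((A.powerset.filter (· ≠ A)).image (B ∪ ·)) := by
  rw [disjoint_left]
  intro S hS hS'
  obtain ⟨F, -, rfl⟩ := mem_image.mp hS'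
  exact hB ((hC _ (mem_filter.mp hS).1).2 B subset_union_left hBne.ne_empty)

end Star

theorem pachner_preserves_eulerChar_general (d k : ℕ)
    (C : Finset (Finset ℕ)) (A B : Finset ℕ)
    (hC : IsComplex C)
    (hA : A ∈ C)
    (hBcard : B.card = d - k + 1) (hB : B ∉ C)
    (hdisj : Disjoint A B)
    (hlink : slink A C = sbdry B) :
    eulerChar (pachner C A B) = eulerChar C := by
  have hAne : A.Nonempty := nonempty_iff_ne_empty.mpr (hC A hA).1
  have hBne : B.Nonempty := card_pos.mp (by omega)
  rw [pachner, eulerChar_union (disjoint_filter_not_superset_image_union hC hB hBne),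
    eulerChar_image_union_proper_faces hAne hBne hdisj.symm,
    ← eulerChar_filter_add_filter_not C (A ⊆ ·), filter_superset_eq_image_union hC hA hBne hlink,
    eulerChar_image_union_proper_faces hBne hAne hdisj, add_comm, add_comm B.card]

/-- A Pachner move preserves the Euler characteristic. -/
theorem pachner_preserves_eulerChar (d k : ℕ) (hk : k ≤ d)
    (C : Finset (Finset ℕ)) (A B : Finset ℕ)
    (hC : IsComplex C) (hpure : IsPure d C)
    (hA : A ∈ C) (hAcard : A.card = k + 1)
    (hBcard : B.card = d - k + 1) (hB : B ∉ C)
    (hdisj : Disjoint A B)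
    (hlink : slink A C = sbdry B) :
    eulerChar (pachner C A B) = eulerChar C :=
  pachner_preserves_eulerChar_general d k C A B hC hA hBcard hB hdisj hlink
end

section
/- If C' is obtained from C by a Pachner move of dimension k on the simplex A, with inserted simplex B, then C is obtained from C' by a Pachner move of dimension d-k on the simplex B, with inserted simplex A. In particular, the link of B in C' is the boundary of the simplex A. -/
open Finset

/-- a Pachner move of dimension k on A (inserting B) is inverted by the
Pachner move of dimension d-k on B (inserting A); in particular the link of B in the
new complex is the boundary of A. -/
theorem pachner_move_inverse (d k : ℕ) (hk : k ≤ d)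
    (C : Finset (Finset ℕ)) (A B : Finset ℕ)
    (hC : IsComplex C) (hpure : IsPure d C)
    (hpm : ∀ S ∈ C, S.card = d → (C.filter (fun M => M.card = d + 1 ∧ S ⊆ M)).card = 2)
    (hA : A ∈ C) (hAcard : A.card = k + 1)
    (hBcard : B.card = d - k + 1) (hB : B ∉ C)
    (hdisj : Disjoint A B)
    (hlink : slink A C = sbdry B) :
    slink B (pachner C A B) = sbdry A ∧ pachner (pachner C A B) B A = C := by
  have hAne : A ≠ ∅ := by
    intro h; rw [h] at hAcard; simp at hAcard
  have hBne : B ≠ ∅ := by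
    intro h; rw [h] at hBcard; simp at hBcard
  have hnoB : ∀ S ∈ C, ¬ B ⊆ S := fun S hS hBS => hB ((hC S hS).2 B hBS hBne)
  have hmem : ∀ (D : Finset (Finset ℕ)) (X Y S : Finset ℕ),
      S ∈ pachner D X Y ↔ (S ∈ D ∧ ¬ X ⊆ S) ∨ ∃ F, F ⊆ X ∧ F ≠ X ∧ Y ∪ F = S := by
    intro D X Y S
    simp only [pachner, mem_union, mem_filter, mem_image, mem_powerset]
    constructor
    · rintro (h | ⟨F, ⟨hF1, hF2⟩, hF3⟩)
      · exact Or.inl h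
      · exact Or.inr ⟨F, hF1, hF2, hF3⟩
    · rintro (h | ⟨F, hF1, hF2, hF3⟩)
      · exact Or.inl h
      · exact Or.inr ⟨F, ⟨hF1, hF2⟩, hF3⟩
  have hlinkiff : ∀ L : Finset ℕ,
      (L ∈ C ∧ Disjoint A L ∧ A ∪ L ∈ C) ↔ (L ⊆ B ∧ L ≠ ∅ ∧ L ≠ B) := by
    intro L
    have := Finset.ext_iff.mp hlink L
    simpa [slink, sbdry, mem_filter, mem_powerset, and_assoc] using this
  have h1 : slink B (pachner C A B) = sbdry A := by
    ext L
    simp only [slink, sbdry, mem_filter, mem_powerset]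
    rw [hmem, hmem]
    constructor
    · rintro ⟨hL, hdBL, hBL⟩
      have hLC : L ∈ C ∧ ¬ A ⊆ L := by
        rcases hL with h | ⟨F, hF1, hF2, hF3⟩
        · exact h
        · exfalso
          have hBsub : B ⊆ L := hF3 ▸ subset_union_left
          exact hBne (hdBL.eq_bot_of_le hBsub)
      rcases hBL with ⟨hBLC, _⟩ | ⟨F, hF1, hF2, hF3⟩
      · exact absurd subset_union_left (hnoB _ hBLC)
      · have hFB : Disjoint B F := hdisj.symm.mono_right hF1
        have hLF : F = L := by
          have h' : (B ∪ F) \ B = (B ∪ L) \ B := by rw [hF3]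
          rwa [union_sdiff_cancel_left hFB, union_sdiff_cancel_left hdBL] at h'
        refine ⟨hLF ▸ hF1, (hC L hLC.1).1, hLF ▸ hF2⟩
    · rintro ⟨hLA, hLne, hLneA⟩
      have hLC : L ∈ C := (hC A hA).2 L hLA hLne
      have hnAL : ¬ A ⊆ L := fun h => hLneA (subset_antisymm hLA h)
      exact ⟨Or.inl ⟨hLC, hnAL⟩, hdisj.symm.mono_right hLA,
        Or.inr ⟨L, hLA, hLneA, rfl⟩⟩
  refine ⟨h1, ?_⟩
  ext S
  rw [hmem]
  constructor
  · rintro (⟨hS, hnBS⟩ | ⟨G, hG1, hG2, hG3⟩)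
    · rw [hmem] at hS
      rcases hS with ⟨hSC, _⟩ | ⟨F, hF1, hF2, hF3⟩
      · exact hSC
      · exact absurd (hF3 ▸ subset_union_left) hnBS
    · by_cases hGe : G = ∅
      · rw [hGe, union_empty] at hG3
        rw [← hG3]; exact hA
      · have h' := (hlinkiff G).mpr ⟨hG1, hGe, hG2⟩
        rw [← hG3]; exact h'.2.2
  · intro hSC
    by_cases hAS : A ⊆ S
    · have hu : A ∪ S \ A = S := union_sdiff_of_subset hAS
      have hG : S \ A ⊆ B ∧ S \ A ≠ B := by
        by_cases hGe : S \ A = ∅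
        · rw [hGe]; exact ⟨empty_subset _, fun h => hBne h.symm⟩
        · have hGC : S \ A ∈ C := (hC S hSC).2 _ sdiff_subset hGe
          have h' := (hlinkiff _).mp ⟨hGC, disjoint_sdiff, by rw [hu]; exact hSC⟩
          exact ⟨h'.1, h'.2.2⟩
      exact Or.inr ⟨S \ A, hG.1, hG.2, hu⟩
    · refine Or.inl ⟨?_, hnoB S hSC⟩
      rw [hmem]; exact Or.inl ⟨hSC, hAS⟩
end

section
/- A Pachner move on a simplicial complex C can be expressed as the composition of two stellar operations: a stellar subdivision of the simplex A at a new vertex v, followed by an inverse stellar subdivision (stellar weld) at v of the simplex B. That is, if C' is obtained from C by a Pachner move on A with inserted simplex B, and v is a vertex not in C, then the stellar subdivision of C at A with new vertex v equals the stellar subdivision of C' at B with new vertex v. -/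
open Finset

/-- The stellar subdivision of C at A with new vertex v: remove all simplices containing A
and add the sets {v} ∪ F ∪ L for F a proper (possibly empty) face of A and L a
(possibly empty) simplex of the link of A. -/
def stellar (C : Finset (Finset ℕ)) (A : Finset ℕ) (v : ℕ) : Finset (Finset ℕ) :=
  C.filter (fun S => ¬ A ⊆ S) ∪
    ((A.powerset.filter (fun F => F ≠ A)) ×ˢ (insert ∅ (slink A C))).image
      (fun p => insert v (p.1 ∪ p.2))

/-! Both sides remove exactly the simplices of `C` containing `A` (no simplex of `C` contains `B`)
and add the cones `{v} ∪ F ∪ G` over the joins of proper faces `F ⊊ A` and `G ⊊ B`: on the left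
because the link of `A` in `C` is `∂B`, on the right because the link of `B` in the moved complex
is `∂A`. -/

lemma insert_empty_sbdry {X : Finset ℕ} (hX : X ≠ ∅) :
    insert ∅ (sbdry X) = X.powerset.filter (· ≠ X) := by
  ext S
  simp only [sbdry, mem_insert, mem_filter, mem_powerset]
  constructor
  · rintro (rfl | ⟨hSX, -, hSne⟩)
    · exact ⟨empty_subset X, hX.symm⟩
    · exact ⟨hSX, hSne⟩
  · rintro ⟨hSX, hSne⟩
    by_cases hS : S = ∅
    · exact Or.inl hS
    · exact Or.inr ⟨hSX, hS, hSne⟩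

lemma IsComplex.not_subset_of_notMem {C : Finset (Finset ℕ)} (hC : IsComplex C)
    {B : Finset ℕ} (hB : B ∉ C) (hBne : B ≠ ∅) : ∀ S ∈ C, ¬ B ⊆ S :=
  fun S hS hBS => hB ((hC S hS).2 B hBS hBne)

lemma stellar_eq_of_slink_eq_sbdry {C : Finset (Finset ℕ)} {A B : Finset ℕ} (v : ℕ)
    (hBne : B ≠ ∅) (hlink : slink A C = sbdry B) :
    stellar C A v = C.filter (fun S => ¬ A ⊆ S) ∪
      (A.powerset.filter (· ≠ A) ×ˢ B.powerset.filter (· ≠ B)).image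
        (fun p => insert v (p.1 ∪ p.2)) := by
  rw [stellar, hlink, insert_empty_sbdry hBne]

lemma image_insert_union_product_comm (s t : Finset (Finset ℕ)) (v : ℕ) :
    (s ×ˢ t).image (fun p => insert v (p.1 ∪ p.2)) =
      (t ×ˢ s).image (fun p => insert v (p.1 ∪ p.2)) := by
  rw [← image_swap_product, image_image]
  congr 1
  funext p
  simp only [Function.comp_apply, Prod.fst_swap, Prod.snd_swap, union_comm]

section Pachner

variable {C : Finset (Finset ℕ)} {A B : Finset ℕ}

lemma filter_not_superset_pachner (hnoB : ∀ S ∈ C, ¬ B ⊆ S) :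
    (pachner C A B).filter (fun S => ¬ B ⊆ S) = C.filter (fun S => ¬ A ⊆ S) := by
  ext S
  simp only [pachner, mem_filter, mem_union, mem_image]
  constructor
  · rintro ⟨hS | ⟨F, -, rfl⟩, hBS⟩
    · exact hS
    · exact absurd subset_union_left hBS
  · intro hS
    exact ⟨Or.inl hS, hnoB S hS.1⟩

lemma empty_notMem_pachner (hC : IsComplex C) (hBne : B ≠ ∅) : ∅ ∉ pachner C A B := by
  simp only [pachner, mem_union, mem_filter, mem_image, not_or, not_exists, not_and]
  exact ⟨fun h => ((hC ∅ h).1 rfl).elim, fun F _ hBF => hBne (union_eq_empty.1 hBF).1⟩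

lemma union_mem_pachner_iff (hdisj : Disjoint A B) (hnoB : ∀ S ∈ C, ¬ B ⊆ S) {L : Finset ℕ}
    (hBL : Disjoint B L) : B ∪ L ∈ pachner C A B ↔ L ⊆ A ∧ L ≠ A := by
  simp only [pachner, mem_union, mem_filter, mem_image, mem_powerset]
  constructor
  · rintro (⟨hmem, -⟩ | ⟨F, hF, hFL⟩)
    · exact absurd subset_union_left (hnoB _ hmem)
    · have hBF : Disjoint B F := hdisj.symm.mono_right hF.1
      have hFL' : F = L := by
        rw [← union_sdiff_cancel_left hBF, hFL, union_sdiff_cancel_left hBL]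
      exact hFL' ▸ hF
  · exact fun hL => Or.inr ⟨L, hL, rfl⟩

lemma slink_pachner (hC : IsComplex C) (hA : A ∈ C) (hdisj : Disjoint A B) (hBne : B ≠ ∅)
    (hnoB : ∀ S ∈ C, ¬ B ⊆ S) : slink B (pachner C A B) = sbdry A := by
  ext L
  simp only [slink, sbdry, mem_filter, mem_powerset]
  constructor
  · rintro ⟨hL, hBL, hBLmem⟩
    obtain ⟨hLA, hLne⟩ := (union_mem_pachner_iff hdisj hnoB hBL).1 hBLmem
    exact ⟨hLA, fun h => empty_notMem_pachner hC hBne (h ▸ hL), hLne⟩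
  · rintro ⟨hLA, hLne, hLneA⟩
    have hBL : Disjoint B L := hdisj.symm.mono_right hLA
    have hLC : L ∈ C := (hC A hA).2 L hLA hLne
    have hAL : ¬ A ⊆ L := fun h => hLneA (Subset.antisymm hLA h)
    refine ⟨mem_union_left _ (mem_filter.2 ⟨hLC, hAL⟩), hBL, ?_⟩
    exact (union_mem_pachner_iff hdisj hnoB hBL).2 ⟨hLA, hLneA⟩

end Pachner

theorem pachner_eq_stellar_comp_general (d k : ℕ)
    (C : Finset (Finset ℕ)) (A B : Finset ℕ) (v : ℕ)
    (hC : IsComplex C)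
    (hA : A ∈ C)
    (hBcard : B.card = d - k + 1) (hB : B ∉ C)
    (hdisj : Disjoint A B)
    (hlink : slink A C = sbdry B) :
    stellar C A v = stellar (pachner C A B) B v := by
  have hAne : A ≠ ∅ := (hC A hA).1
  have hBne : B ≠ ∅ := (card_pos.1 (hBcard ▸ Nat.succ_pos _)).ne_empty
  have hnoB := hC.not_subset_of_notMem hB hBne
  rw [stellar_eq_of_slink_eq_sbdry v hBne hlink,
    stellar_eq_of_slink_eq_sbdry v hAne (slink_pachner hC hA hdisj hBne hnoB),
    filter_not_superset_pachner hnoB, image_insert_union_product_comm]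

/-- a Pachner move is the composition of a stellar subdivision and an inverse
stellar subdivision: subdividing C at A with new vertex v gives the same complex as
subdividing the moved complex at B with new vertex v. -/
theorem pachner_eq_stellar_comp (d k : ℕ) (hk : k ≤ d)
    (C : Finset (Finset ℕ)) (A B : Finset ℕ) (v : ℕ)
    (hC : IsComplex C) (hpure : IsPure d C)
    (hA : A ∈ C) (hAcard : A.card = k + 1)
    (hBcard : B.card = d - k + 1) (hB : B ∉ C)
    (hdisj : Disjoint A B)
    (hlink : slink A C = sbdry B)
    (hv : ∀ S ∈ C, v ∉ S) (hvB : v ∉ B) :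
    stellar C A v = stellar (pachner C A B) B v :=
  pachner_eq_stellar_comp_general d k C A B v hC hA hBcard hB hdisj hlink
end

section
/- A Pachner move preserves the closed pseudomanifold property: if C is a pure d-dimensional simplicial complex in which every (d-1)-simplex lies in exactly two d-simplices, and C' is obtained from C by a Pachner move of dimension k, then C' is also pure of dimension d and every (d-1)-simplex of C' lies in exactly two d-simplices of C'. -/
open Finset

/-- a Pachner move preserves the closed pseudomanifold property: purity of
dimension d and every (d-1)-simplex lying in exactly two d-simplices. -/
theorem pachner_preserves_pseudomanifold (d k : ℕ) (hk : k ≤ d)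
    (C : Finset (Finset ℕ)) (A B : Finset ℕ)
    (hC : IsComplex C) (hpure : IsPure d C)
    (hpm : ∀ S ∈ C, S.card = d → (C.filter (fun M => M.card = d + 1 ∧ S ⊆ M)).card = 2)
    (hA : A ∈ C) (hAcard : A.card = k + 1)
    (hBcard : B.card = d - k + 1) (hB : B ∉ C)
    (hdisj : Disjoint A B)
    (hlink : slink A C = sbdry B) :
    IsPure d (pachner C A B) ∧
    ∀ S ∈ pachner C A B, S.card = d →
      ((pachner C A B).filter (fun M => M.card = d + 1 ∧ S ⊆ M)).card = 2 := by
  classical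
  have hBne : B ≠ ∅ := by
    intro h; rw [h] at hBcard; simp at hBcard
  have hBnotsub : ∀ S ∈ C, ¬ B ⊆ S := by
    intro S hS hBS
    exact hB ((hC S hS).2 B hBS hBne)
  have hmem : ∀ S, S ∈ pachner C A B ↔
      (S ∈ C ∧ ¬ A ⊆ S) ∨ (∃ F, F ⊆ A ∧ F ≠ A ∧ S = B ∪ F) := by
    intro S
    simp only [pachner, mem_union, mem_filter, mem_image, mem_powerset]
    constructor
    · rintro (⟨h1, h2⟩ | ⟨F, ⟨hF1, hF2⟩, hF3⟩)
      · exact Or.inl ⟨h1, h2⟩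
      · exact Or.inr ⟨F, hF1, hF2, hF3.symm⟩
    · rintro (⟨h1, h2⟩ | ⟨F, hF1, hF2, hF3⟩)
      · exact Or.inl ⟨h1, h2⟩
      · exact Or.inr ⟨F, ⟨hF1, hF2⟩, hF3.symm⟩
  have hcardBF : ∀ F ⊆ A, (B ∪ F).card = (d - k + 1) + F.card := by
    intro F hF
    rw [card_union_of_disjoint (hdisj.symm.mono_right hF), hBcard]
  -- B ∪ G is a new facet for any k-subset G of A
  have hnewfacet : ∀ G ⊆ A, G.card = k → B ∪ G ∈ pachner C A B ∧ (B ∪ G).card = d + 1 := by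
    intro G hGA hGk
    have hGne : G ≠ A := by
      intro h; rw [h, hAcard] at hGk; omega
    refine ⟨(hmem _).2 (Or.inr ⟨G, hGA, hGne, rfl⟩), ?_⟩
    rw [hcardBF G hGA, hGk]; omega
  -- new simplices are not in C
  have hnewnotC : ∀ F, (B ∪ F) ∉ C := by
    intro F hFC
    exact hBnotsub _ hFC subset_union_left
  constructor
  · -- purity
    intro S hS
    rcases (hmem S).1 hS with ⟨hSC, hAS⟩ | ⟨F, hFA, hFne, rfl⟩
    · obtain ⟨M, hMC, hSM, hMcard⟩ := hpure S hSC
      by_cases hAM : A ⊆ M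
      · -- S ⊆ A ∪ B, extend S ∩ A to a k-subset of A
        have hSAB : S ⊆ A ∪ B := by
          intro x hx
          by_cases hxA : x ∈ A
          · exact mem_union_left _ hxA
          · have hxL : x ∈ M \ A := mem_sdiff.2 ⟨hSM hx, hxA⟩
            have hLne : M \ A ≠ ∅ := by
              intro h
              exact (notMem_empty x) (h ▸ hxL)
            have hLC : M \ A ∈ C := (hC M hMC).2 _ sdiff_subset hLne
            have hMeq : A ∪ (M \ A) = M := union_sdiff_of_subset hAM
            have hLlink : M \ A ∈ slink A C := by
              rw [slink, mem_filter]
              refine ⟨hLC, disjoint_sdiff, ?_⟩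
              rw [hMeq]
              exact hMC
            rw [hlink, sbdry, mem_filter, mem_powerset] at hLlink
            exact mem_union_right _ (hLlink.1 hxL)
        have hSAlt : (S ∩ A).card ≤ k := by
          have hss : S ∩ A ⊂ A := by
            refine Finset.ssubset_iff_subset_ne.2 ⟨inter_subset_right, ?_⟩
            intro heq
            refine hAS (fun x hx => ?_)
            rw [← heq] at hx
            exact (mem_inter.1 hx).1
          have := card_lt_card hss
          omega
        obtain ⟨G, hG1, hG2, hG3⟩ := exists_subsuperset_card_eq inter_subset_right hSAlt (by omega)
        obtain ⟨hmem', hcard'⟩ := hnewfacet G hG2 hG3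
        refine ⟨B ∪ G, hmem', ?_, hcard'⟩
        intro x hx
        rcases mem_union.1 (hSAB hx) with h | h
        · exact mem_union_right _ (hG1 (mem_inter.2 ⟨hx, h⟩))
        · exact mem_union_left _ h
      · exact ⟨M, (hmem M).2 (Or.inl ⟨hMC, hAM⟩), hSM, hMcard⟩
    · have hFlt : F.card ≤ k := by
        have := card_lt_card (Finset.ssubset_iff_subset_ne.2 ⟨hFA, hFne⟩)
        omega
      obtain ⟨G, hG1, hG2, hG3⟩ := exists_subsuperset_card_eq hFA hFlt (by omega)
      obtain ⟨hmem', hcard'⟩ := hnewfacet G hG2 hG3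
      exact ⟨B ∪ G, hmem', union_subset_union_right hG1, hcard'⟩
  · -- ridge count
    intro S hS hScard
    rcases (hmem S).1 hS with ⟨hSC, hAS⟩ | ⟨F, hFA, hFne, rfl⟩
    · -- Case 1: S is an old simplex
      set Q := C.filter (fun M => M.card = d + 1 ∧ S ⊆ M) with hQdef
      have hQcard : Q.card = 2 := hpm S hSC hScard
      by_cases h : S ⊆ A ∪ B
      · -- one facet is replaced
        have hSBssub : S ∩ B ⊂ B := by
          refine Finset.ssubset_iff_subset_ne.2 ⟨inter_subset_right, ?_⟩
          intro heq
          refine hBnotsub S hSC (fun x hx => ?_)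
          rw [← heq] at hx
          exact (mem_inter.1 hx).1
        have hSAssub : S ∩ A ⊂ A := by
          refine Finset.ssubset_iff_subset_ne.2 ⟨inter_subset_right, ?_⟩
          intro heq
          refine hAS (fun x hx => ?_)
          rw [← heq] at hx
          exact (mem_inter.1 hx).1
        have hsplit : (S ∩ A) ∪ (S ∩ B) = S := by
          rw [← inter_union_distrib_left]
          exact inter_eq_left.2 h
        have hcards : (S ∩ A).card + (S ∩ B).card = d := by
          rw [← card_union_of_disjoint (hdisj.mono inter_subset_right inter_subset_right),
            hsplit, hScard]
        have hSBlt : (S ∩ B).card ≤ d - k := by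
          have := card_lt_card hSBssub
          omega
        have hSAk : (S ∩ A).card = k := by
          have h1 := card_lt_card hSAssub
          omega
        set F0 := S ∩ A with hF0def
        set N := B ∪ F0 with hNdef
        set M0 := A ∪ S with hM0def
        have hASk : (A ∩ S).card = k := by rw [inter_comm]; exact hSAk
        have hM0card : M0.card = d + 1 := by
          rw [hM0def]
          have h1 := card_union_add_card_inter A S
          rw [hAcard, hScard, hASk] at h1
          omega
        have hM0eq : M0 = A ∪ (S ∩ B) := by
          ext x
          simp only [hM0def, mem_union, mem_inter]
          constructor
          · rintro (hx | hx)
            · exact Or.inl hx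
            · rcases mem_union.1 (h hx) with h' | h'
              · exact Or.inl h'
              · exact Or.inr ⟨hx, h'⟩
          · rintro (hx | ⟨hx, _⟩)
            · exact Or.inl hx
            · exact Or.inr hx
        have hM0C : M0 ∈ C := by
          by_cases hSB0 : S ∩ B = ∅
          · have hSA : S ⊆ A := by
              intro x hx
              rcases mem_union.1 (h hx) with h' | h'
              · exact h'
              · exact absurd (mem_inter.2 ⟨hx, h'⟩) (by rw [hSB0]; exact notMem_empty x)
            rw [hM0def, union_eq_left.2 hSA]
            exact hA
          · have hbd : S ∩ B ∈ sbdry B := by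
              rw [sbdry, mem_filter, mem_powerset]
              exact ⟨inter_subset_right, hSB0, (Finset.ssubset_iff_subset_ne.1 hSBssub).2⟩
            rw [← hlink, slink, mem_filter] at hbd
            rw [hM0eq]
            exact hbd.2.2
        have hM0Q : M0 ∈ Q := by
          rw [hQdef, mem_filter]
          exact ⟨hM0C, hM0card, subset_union_right⟩
        have hPeq : (pachner C A B).filter (fun M => M.card = d + 1 ∧ S ⊆ M)
            = insert N (Q.erase M0) := by
          ext M
          simp only [mem_filter, mem_insert, mem_erase, hQdef]
          constructor
          · rintro ⟨hMp, hMc, hSM⟩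
            rcases (hmem M).1 hMp with ⟨h1, h2⟩ | ⟨F, hFA', hFne', rfl⟩
            · refine Or.inr ⟨?_, h1, hMc, hSM⟩
              intro heq
              exact h2 (heq ▸ (subset_union_left : A ⊆ A ∪ S))
            · have hFk : F.card = k := by
                have := hcardBF F hFA'
                omega
              have hF0F : F0 ⊆ F := by
                intro x hx
                rcases mem_union.1 (hSM (mem_inter.1 hx).1) with hxB | hxF
                · exact absurd hxB (disjoint_left.1 hdisj (mem_inter.1 hx).2)
                · exact hxF
              have heqF : F0 = F :=
                eq_of_subset_of_card_le hF0F (by rw [hFk, hF0def, hSAk])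
              exact Or.inl (by rw [← heqF])
          · rintro (rfl | ⟨hne, hMC, hMc, hSM⟩)
            · obtain ⟨hm, hc⟩ := hnewfacet F0 inter_subset_right hSAk
              refine ⟨hm, hc, ?_⟩
              intro x hx
              rcases mem_union.1 (h hx) with hxA | hxB
              · exact mem_union_right _ (mem_inter.2 ⟨hx, hxA⟩)
              · exact mem_union_left _ hxB
            · refine ⟨(hmem M).2 (Or.inl ⟨hMC, ?_⟩), hMc, hSM⟩
              intro hAM
              exact hne ((eq_of_subset_of_card_le (union_subset hAM hSM)
                (by rw [hMc, hM0card])).symm)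
        have hNnot : N ∉ Q.erase M0 := by
          intro hmem'
          exact hnewnotC F0 (mem_filter.1 (mem_of_mem_erase hmem')).1
        rw [hPeq, card_insert_of_notMem hNnot, card_erase_of_mem hM0Q, hQcard]
      · -- no facet through S contains A; the filter is unchanged
        have hQeq : (pachner C A B).filter (fun M => M.card = d + 1 ∧ S ⊆ M) = Q := by
          ext M
          simp only [mem_filter, hQdef]
          constructor
          · rintro ⟨hMp, hMc, hSM⟩
            rcases (hmem M).1 hMp with ⟨h1, _⟩ | ⟨F, hFA, _, rfl⟩
            · exact ⟨h1, hMc, hSM⟩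
            · exact absurd (hSM.trans (union_subset_union_right hFA)) (by rwa [union_comm] at h)
          · rintro ⟨hMC, hMc, hSM⟩
            refine ⟨(hmem M).2 (Or.inl ⟨hMC, ?_⟩), hMc, hSM⟩
            intro hAM
            -- then M = A ∪ S and S \ A ∈ link A C, so S ⊆ A ∪ B, contradiction
            have hAScard : (A ∩ S).card ≤ k := by
              have hss : A ∩ S ⊂ A := by
                refine Finset.ssubset_iff_subset_ne.2 ⟨inter_subset_left, ?_⟩
                intro heq
                refine hAS (fun x hx => ?_)
                rw [← heq] at hx
                exact (mem_inter.1 hx).2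
              have := card_lt_card hss
              omega
            have hAUS : A ∪ S ⊆ M := union_subset hAM hSM
            have hAUScard : (A ∪ S).card + (A ∩ S).card = (k + 1) + d := by
              rw [card_union_add_card_inter, hAcard, hScard]
            have hMeqAS : M = A ∪ S := by
              refine (eq_of_subset_of_card_le hAUS ?_).symm
              have := card_le_card hAUS
              omega
            have hSAne : ¬ S ⊆ A := fun hsa => h (hsa.trans subset_union_left)
            have hSdne : S \ A ≠ ∅ := by
              intro heq
              exact hSAne (fun x hx => by
                by_contra hxA
                exact (notMem_empty x) (heq ▸ mem_sdiff.2 ⟨hx, hxA⟩))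
            have hSdC : S \ A ∈ C := (hC S hSC).2 _ sdiff_subset hSdne
            have hSdlink : S \ A ∈ slink A C := by
              rw [slink, mem_filter]
              refine ⟨hSdC, disjoint_sdiff, ?_⟩
              have : A ∪ (S \ A) = A ∪ S := union_sdiff_self_eq_union
              rw [this, ← hMeqAS]; exact hMC
            rw [hlink, sbdry, mem_filter, mem_powerset] at hSdlink
            refine h (fun x hx => ?_)
            by_cases hxA : x ∈ A
            · exact mem_union_left _ hxA
            · exact mem_union_right _ (hSdlink.1 (mem_sdiff.2 ⟨hx, hxA⟩))
        rw [hQeq, hQcard]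
    · -- Case 2: S = B ∪ F is a new ridge
      have hFk : F.card + 1 = k := by
        have := hcardBF F hFA
        omega
      have hPeq : (pachner C A B).filter (fun M => M.card = d + 1 ∧ B ∪ F ⊆ M)
          = (A \ F).image (fun a => insert a (B ∪ F)) := by
        ext M
        simp only [mem_filter, mem_image, mem_sdiff]
        constructor
        · rintro ⟨hMp, hMc, hSM⟩
          rcases (hmem M).1 hMp with ⟨h1, _⟩ | ⟨F', hF'A, hF'ne, rfl⟩
          · exact absurd ((subset_union_left : B ⊆ B ∪ F).trans hSM) (hBnotsub M h1)
          · have hF'k : F'.card = k := by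
              have := hcardBF F' hF'A
              omega
            have hFF' : F ⊆ F' := by
              intro x hx
              rcases mem_union.1 (hSM (mem_union_right _ hx)) with hxB | h'
              · exact absurd hxB (disjoint_left.1 hdisj (hFA hx))
              · exact h'
            have hex : (F' \ F).Nonempty := by
              rw [← card_pos, card_sdiff_of_subset hFF']
              omega
            obtain ⟨a, ha⟩ := hex
            have haF' : a ∈ F' := (mem_sdiff.1 ha).1
            have haF : a ∉ F := (mem_sdiff.1 ha).2
            refine ⟨a, ⟨hF'A haF', haF⟩, ?_⟩
            have hins : insert a F ⊆ F' := insert_subset haF' hFF'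
            have heq : insert a F = F' :=
              eq_of_subset_of_card_le hins
                (by rw [hF'k, card_insert_of_notMem haF]; omega)
            rw [← union_insert, heq]
        · rintro ⟨a, ⟨haA, haF⟩, rfl⟩
          have hsub : insert a F ⊆ A := insert_subset haA hFA
          have hk' : (insert a F).card = k := by
            rw [card_insert_of_notMem haF]; omega
          obtain ⟨hm, hc⟩ := hnewfacet (insert a F) hsub hk'
          rw [union_insert] at hm hc
          exact ⟨hm, hc, (union_subset_union_right (subset_insert a F)).trans
            (by rw [union_insert])⟩
      rw [hPeq]
      have hinj : Set.InjOn (fun a => insert a (B ∪ F)) ↑(A \ F) := by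
        intro a ha b hb hab
        have haS : a ∉ B ∪ F := by
          simp only [mem_union]
          push_neg
          refine ⟨disjoint_left.1 hdisj ?_, ?_⟩
          · exact (mem_sdiff.1 (by exact_mod_cast ha)).1
          · exact (mem_sdiff.1 (by exact_mod_cast ha)).2
        simp only at hab
        rcases mem_insert.1 (hab ▸ mem_insert_self a (B ∪ F)) with h' | h'
        · exact h'
        · exact absurd h' haS
      rw [card_image_of_injOn hinj, card_sdiff_of_subset hFA, hAcard]
      omega
end
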